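/- arXiv:1203.5387 — 10 statements merged into one kernel-verified Lean document; each statement's English description precedes it below -/
import Mathlib

section
/- For every k : ℕ and every vertex v, the Hash-Min label after k rounds equals the minimum vertex of the closed k-ball around v; that is, f k v = min {u : V | G.Reachable v u ∧ G.dist v u ≤ k} (this set is finite, contains v, and is hence nonempty). -/
open scoped Classical

private lemma hashMin_mem_ball {V : Type*} [Fintype V] [Nonempty V] [LinearOrder V]
    (G : SimpleGraph V) [DecidableRel G.Adj]
    (f : ℕ → V → V)
    (hf0 : ∀ v : V, f 0 v = v)
    (hfs : ∀ (k : ℕ) (v : V),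
      f (k + 1) v = ({f k v} ∪ (G.neighborFinset v).image (f k)).min' ⟨f k v, Finset.mem_union_left _ (Finset.mem_singleton_self _)⟩) :
    ∀ (k : ℕ) (v : V), G.Reachable v (f k v) ∧ G.dist v (f k v) ≤ k := by
  intro k
  induction k with
  | zero => intro v; rw [hf0]; exact ⟨SimpleGraph.Reachable.refl v, by simp⟩
  | succ k ih =>
    intro v
    have hmem := Finset.min'_mem ({f k v} ∪ (G.neighborFinset v).image (f k))
      ⟨f k v, Finset.mem_union_left _ (Finset.mem_singleton_self _)⟩
    rw [← hfs] at hmem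
    rcases Finset.mem_union.mp hmem with h | h
    · rw [Finset.mem_singleton] at h
      rw [h]
      exact ⟨(ih v).1, le_trans (ih v).2 (Nat.le_succ k)⟩
    · obtain ⟨w, hw, hfw⟩ := Finset.mem_image.mp h
      rw [SimpleGraph.mem_neighborFinset] at hw
      rw [← hfw]
      obtain ⟨p, hp⟩ := (ih w).1.exists_walk_length_eq_dist
      refine ⟨hw.reachable.trans (ih w).1, ?_⟩
      calc G.dist v (f k w) ≤ (SimpleGraph.Walk.cons hw p).length :=
            SimpleGraph.dist_le _
        _ = p.length + 1 := by simp
        _ ≤ k + 1 := by rw [hp]; exact Nat.add_le_add_right (ih w).2 1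

private lemma hashMin_le_ball {V : Type*} [Fintype V] [Nonempty V] [LinearOrder V]
    (G : SimpleGraph V) [DecidableRel G.Adj]
    (f : ℕ → V → V)
    (hf0 : ∀ v : V, f 0 v = v)
    (hfs : ∀ (k : ℕ) (v : V),
      f (k + 1) v = ({f k v} ∪ (G.neighborFinset v).image (f k)).min' ⟨f k v, Finset.mem_union_left _ (Finset.mem_singleton_self _)⟩) :
    ∀ (k : ℕ) (v u : V), G.Reachable v u → G.dist v u ≤ k → f k v ≤ u := by
  intro k
  induction k with
  | zero =>
    intro v u h hd
    have : v = u := by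
      have := SimpleGraph.Reachable.dist_eq_zero_iff h |>.mp (Nat.le_zero.mp hd)
      exact this
    rw [hf0, this]
  | succ k ih =>
    intro v u h hd
    obtain ⟨p, hp⟩ := h.exists_walk_length_eq_dist
    cases p with
    | nil =>
      have h1 : f (k+1) v ≤ f k v := by
        rw [hfs]
        exact Finset.min'_le _ _ (Finset.mem_union_left _ (Finset.mem_singleton_self _))
      exact le_trans h1 (ih v v (SimpleGraph.Reachable.refl v) (by simp [SimpleGraph.dist_self]))
    | cons hadj q =>
      rename_i w
      have hq : G.dist w u ≤ k := by
        have : q.length + 1 ≤ k + 1 := by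
          rw [show q.length + 1 = (SimpleGraph.Walk.cons hadj q).length from rfl, hp]
          exact hd
        exact le_trans (SimpleGraph.dist_le q) (Nat.succ_le_succ_iff.mp this)
      have h1 : f (k+1) v ≤ f k w := by
        rw [hfs]
        exact Finset.min'_le _ _ (Finset.mem_union_right _
          (Finset.mem_image_of_mem _ (by simpa using hadj)))
      exact le_trans h1 (ih w u q.reachable hq)

/-- For every `k : ℕ` and every vertex `v`, the Hash-Min label after `k`
rounds equals the minimum vertex of the closed `k`-ball around `v`. -/
theorem hashMin_eq_min_ball {V : Type*} [Fintype V] [Nonempty V] [LinearOrder V]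
    (G : SimpleGraph V) [DecidableRel G.Adj]
    (f : ℕ → V → V)
    (hf0 : ∀ v : V, f 0 v = v)
    (hfs : ∀ (k : ℕ) (v : V),
      f (k + 1) v = ({f k v} ∪ (G.neighborFinset v).image (f k)).min' ⟨f k v, Finset.mem_union_left _ (Finset.mem_singleton_self _)⟩)
    (k : ℕ) (v : V) :
    f k v = (Finset.univ.filter fun u => G.Reachable v u ∧ G.dist v u ≤ k).min'
      ⟨v, Finset.mem_filter.mpr ⟨Finset.mem_univ v, SimpleGraph.Reachable.refl v, by simp [SimpleGraph.dist_self]⟩⟩ := by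
  apply le_antisymm
  · apply Finset.le_min'
    intro u hu
    obtain ⟨-, h1, h2⟩ := Finset.mem_filter.mp hu
    exact hashMin_le_ball G f hf0 hfs k v u h1 h2
  · apply Finset.min'_le
    obtain ⟨h1, h2⟩ := hashMin_mem_ball G f hf0 hfs k v
    exact Finset.mem_filter.mpr ⟨Finset.mem_univ _, h1, h2⟩
end

section
/- Suppose D : ℕ is such that every pair of reachable vertices of G is at graph distance at most D. Then for every k ≥ D and every vertex v, the Hash-Min label f k v equals the minimum vertex of the connected component of v (i.e., the minimum of {u : V | G.Reachable v u}); consequently, for all vertices u and w, f k u = f k w if and only if G.Reachable u w. -/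
open scoped Classical

/-- If every pair of reachable vertices is at graph distance at most `D`,
then for every `k ≥ D` the Hash-Min label of every vertex `v` is the minimum vertex of
the connected component of `v`; consequently two vertices get the same label iff they
are reachable from one another. -/
theorem hashMin_converges {V : Type*} [Fintype V] [Nonempty V] [LinearOrder V]
    (G : SimpleGraph V) [DecidableRel G.Adj]
    (f : ℕ → V → V)
    (hf0 : ∀ v : V, f 0 v = v)
    (hfs : ∀ (k : ℕ) (v : V),
      f (k + 1) v = ({f k v} ∪ (G.neighborFinset v).image (f k)).min'
        ⟨f k v, Finset.mem_union_left _ (Finset.mem_singleton_self _)⟩)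
    (D : ℕ) (hD : ∀ u w : V, G.Reachable u w → G.dist u w ≤ D) :
    ∀ k, D ≤ k →
      (∀ v : V, f k v = (Finset.univ.filter fun u => G.Reachable v u).min'
          ⟨v, Finset.mem_filter.mpr ⟨Finset.mem_univ v, SimpleGraph.Reachable.refl v⟩⟩) ∧
      (∀ u w : V, f k u = f k w ↔ G.Reachable u w) := by
  -- f k v is reachable from v
  have hreach : ∀ k v, G.Reachable v (f k v) := by
    intro k
    induction k with
    | zero => intro v; rw [hf0]
    | succ k ih =>
      intro v
      have hm : f (k + 1) v ∈ ({f k v} ∪ (G.neighborFinset v).image (f k)) := by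
        rw [hfs k v]; exact Finset.min'_mem _ _
      rcases Finset.mem_union.mp hm with h | h
      · rw [Finset.mem_singleton] at h; rw [h]; exact ih v
      · rcases Finset.mem_image.mp h with ⟨u, hu, he⟩
        rw [← he]
        exact ((SimpleGraph.mem_neighborFinset G v u).mp hu).reachable.trans (ih u)
  -- f k v is ≤ any vertex within distance k
  have hle : ∀ k (v u : V), G.Reachable v u → G.dist v u ≤ k → f k v ≤ u := by
    intro k
    induction k with
    | zero =>
      intro v u hr hd
      have : v = u := hr.dist_eq_zero_iff.mp (Nat.le_zero.mp hd)
      rw [hf0, this]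
    | succ k ih =>
      intro v u hr hd
      have hmon : f (k + 1) v ≤ f k v := by
        rw [hfs k v]
        exact Finset.min'_le _ _ (Finset.mem_union_left _ (Finset.mem_singleton_self _))
      by_cases h : G.dist v u ≤ k
      · exact le_trans hmon (ih v u hr h)
      · have hdk : G.dist v u = k + 1 := le_antisymm hd (Nat.not_le.mp h)
        obtain ⟨p, hp⟩ := hr.exists_walk_length_eq_dist
        rw [hdk] at hp
        cases p with
        | nil => simp at hp
        | cons hadj q =>
          rename_i w
          have hq : q.length = k := by simpa using hp
          have hdist : G.dist w u ≤ k := hq ▸ SimpleGraph.dist_le q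
          have h1 : f (k + 1) v ≤ f k w := by
            rw [hfs k v]
            exact Finset.min'_le _ _ (Finset.mem_union_right _
              (Finset.mem_image.mpr ⟨w, (SimpleGraph.mem_neighborFinset G v w).mpr hadj, rfl⟩))
          exact le_trans h1 (ih w u q.reachable hdist)
  intro k hk
  have hcomp : ∀ v : V, f k v = (Finset.univ.filter fun u => G.Reachable v u).min'
      ⟨v, Finset.mem_filter.mpr ⟨Finset.mem_univ v, SimpleGraph.Reachable.refl v⟩⟩ := by
    intro v
    set S := Finset.univ.filter fun u => G.Reachable v u with hS
    have hne : S.Nonempty :=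
      ⟨v, Finset.mem_filter.mpr ⟨Finset.mem_univ v, SimpleGraph.Reachable.refl v⟩⟩
    apply le_antisymm
    · have hmem := Finset.min'_mem S hne
      have hr : G.Reachable v (S.min' hne) := (Finset.mem_filter.mp hmem).2
      exact hle k v _ hr (le_trans (hD v _ hr) hk)
    · exact Finset.min'_le _ _ (Finset.mem_filter.mpr ⟨Finset.mem_univ _, hreach k v⟩)
  refine ⟨hcomp, fun u w => ⟨fun h => ?_, fun hr => ?_⟩⟩
  · exact (hreach k u).trans (h ▸ (hreach k w).symm)
  · rw [hcomp u, hcomp w]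
    have hset : (Finset.univ.filter fun x => G.Reachable u x)
        = (Finset.univ.filter fun x => G.Reachable w x) := by
      ext x
      simp only [Finset.mem_filter, Finset.mem_univ, true_and]
      exact ⟨fun hx => hr.symm.trans hx, fun hx => hr.trans hx⟩
    apply le_antisymm
    · have hm := Finset.min'_mem (Finset.univ.filter fun x => G.Reachable w x)
        ⟨w, Finset.mem_filter.mpr ⟨Finset.mem_univ w, SimpleGraph.Reachable.refl w⟩⟩
      exact Finset.min'_le _ _ (Finset.mem_filter.mpr
        ⟨Finset.mem_univ _, hr.trans (Finset.mem_filter.mp hm).2⟩)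
    · have hm := Finset.min'_mem (Finset.univ.filter fun x => G.Reachable u x)
        ⟨u, Finset.mem_filter.mpr ⟨Finset.mem_univ u, SimpleGraph.Reachable.refl u⟩⟩
      exact Finset.min'_le _ _ (Finset.mem_filter.mpr
        ⟨Finset.mem_univ _, hr.symm.trans (Finset.mem_filter.mp hm).2⟩)
end

section
/- For every k : ℕ and all vertices v and u, if G.Reachable v u and G.dist v u ≤ 2^k, then u ∈ A k v; that is, after k rounds the Hash-to-All cluster of v contains every vertex within graph distance 2^k of v. -/
open scoped Classical

lemma walk_drop_length {V : Type*} {G : SimpleGraph V} :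
    ∀ {v u : V} (p : G.Walk v u) (n : ℕ), (p.drop n).length = p.length - n := by
  intro v u p
  induction p with
  | nil => intro n; cases n <;> simp [SimpleGraph.Walk.drop]
  | cons h q ih =>
      intro n
      cases n with
      | zero => simp [SimpleGraph.Walk.drop]
      | succ m => simpa [SimpleGraph.Walk.drop] using ih m

lemma hashToAll_of_walk {V : Type*} [Fintype V]
    (G : SimpleGraph V) [DecidableRel G.Adj] [DecidableEq V]
    (A : ℕ → V → Finset V)
    (hA0 : ∀ v : V, A 0 v = {v} ∪ G.neighborFinset v)
    (hAs : ∀ (k : ℕ) (v : V), A (k + 1) v = (A k v).biUnion (A k)) :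
    ∀ (k : ℕ) (v u : V) (p : G.Walk v u), p.length ≤ 2 ^ k → u ∈ A k v := by
  intro k
  induction k with
  | zero =>
      intro v u p hp
      rw [hA0, Finset.mem_union]
      cases p with
      | nil => exact Or.inl (by simp)
      | cons h q =>
          simp only [SimpleGraph.Walk.length_cons, pow_zero] at hp
          have hq : q.length = 0 := by omega
          have := (SimpleGraph.Walk.eq_of_length_eq_zero hq)
          subst this
          exact Or.inr (by simpa using h)
  | succ k ih =>
      intro v u p hp
      rw [hAs, Finset.mem_biUnion]
      by_cases hle : p.length ≤ 2 ^ k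
      · refine ⟨v, ?_, ih v u p hle⟩
        exact ih v v .nil (by positivity)
      · push_neg at hle
        have h2 : 2 ^ k ≤ p.length := hle.le
        -- suffix walk
        set w := p.getVert (2 ^ k) with hw
        have hsuf : (p.drop (2 ^ k)).length ≤ 2 ^ k := by
          rw [walk_drop_length]
          have : (2:ℕ) ^ (k+1) = 2 ^ k + 2 ^ k := by ring
          omega
        -- prefix walk via reverse
        have hrg : p.reverse.getVert (p.length - 2 ^ k) = w := by
          rw [SimpleGraph.Walk.getVert_reverse]
          congr 1
          omega
        have hpre : (p.reverse.drop (p.length - 2 ^ k)).length ≤ 2 ^ k := by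
          rw [walk_drop_length, SimpleGraph.Walk.length_reverse]
          omega
        refine ⟨w, ?_, ih w u (p.drop (2 ^ k)) hsuf⟩
        let q := ((p.reverse.drop (p.length - 2 ^ k)).copy hrg rfl).reverse
        exact ih v w q (by simp only [q, SimpleGraph.Walk.length_reverse, SimpleGraph.Walk.length_copy]; exact hpre)

/-- After `k` rounds, the Hash-to-All cluster of `v` contains every vertex
within graph distance `2^k` of `v`. -/
theorem hashToAll_ball_subset {V : Type*} [Fintype V]
    (G : SimpleGraph V) [DecidableRel G.Adj] [DecidableEq V]
    (A : ℕ → V → Finset V)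
    (hA0 : ∀ v : V, A 0 v = {v} ∪ G.neighborFinset v)
    (hAs : ∀ (k : ℕ) (v : V), A (k + 1) v = (A k v).biUnion (A k))
    (k : ℕ) (v u : V) (hreach : G.Reachable v u) (hdist : G.dist v u ≤ 2 ^ k) :
    u ∈ A k v := by
  obtain ⟨p, hp⟩ := hreach.exists_walk_length_eq_dist
  exact hashToAll_of_walk G A hA0 hAs k v u p (hp ▸ hdist)
end

section
/- Suppose k : ℕ is such that every pair of reachable vertices of G is at graph distance at most 2^k. Then for every vertex v, the Hash-to-All cluster A k v equals the connected component of v, i.e., A k v = {u : V | G.Reachable v u}. -/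
open scoped Classical

lemma walk_split {V : Type*} {G : SimpleGraph V} :
    ∀ (m : ℕ) {v u : V} (p : G.Walk v u), m ≤ p.length →
      ∃ (w : V) (q : G.Walk v w) (r : G.Walk w u),
        q.length = m ∧ r.length = p.length - m := by
  intro m
  induction m with
  | zero => intro v u p _; exact ⟨v, SimpleGraph.Walk.nil, p, rfl, rfl⟩
  | succ n ih =>
    intro v u p hm
    cases p with
    | nil => simp at hm
    | cons h q =>
      obtain ⟨w, q', r, h1, h2⟩ := ih q (by simpa using hm)
      exact ⟨w, q'.cons h, r, by simp [h1], by simpa using h2⟩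

/-- If every pair of reachable vertices is at graph distance at most `2^k`,
then the Hash-to-All cluster `A k v` equals the connected component of `v`. -/
theorem hashToAll_eq_component {V : Type*} [Fintype V]
    (G : SimpleGraph V) [DecidableRel G.Adj] [DecidableEq V]
    (A : ℕ → V → Finset V)
    (hA0 : ∀ v : V, A 0 v = {v} ∪ G.neighborFinset v)
    (hAs : ∀ (k : ℕ) (v : V), A (k + 1) v = (A k v).biUnion (A k))
    (k : ℕ) (hk : ∀ u w : V, G.Reachable u w → G.dist u w ≤ 2 ^ k) :
    ∀ v : V, A k v = Finset.univ.filter fun u => G.Reachable v u := by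
  have fwd : ∀ (n : ℕ) (v u : V), u ∈ A n v → G.Reachable v u := by
    intro n
    induction n with
    | zero =>
      intro v u hu
      rw [hA0] at hu
      rcases Finset.mem_union.1 hu with h | h
      · simp only [Finset.mem_singleton] at h; subst h; exact SimpleGraph.Reachable.refl _
      · exact ((SimpleGraph.mem_neighborFinset _ _ _).1 h).reachable
    | succ n ih =>
      intro v u hu
      rw [hAs] at hu
      obtain ⟨w, hw, hu⟩ := Finset.mem_biUnion.1 hu
      exact (ih v w hw).trans (ih w u hu)
  have bwd : ∀ (n : ℕ) (v u : V) (p : G.Walk v u), p.length ≤ 2 ^ n → u ∈ A n v := by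
    intro n
    induction n with
    | zero =>
      intro v u p hp
      rw [hA0]
      cases p with
      | nil => simp
      | cons h q =>
        simp only [SimpleGraph.Walk.length_cons, pow_zero] at hp
        have : q.length = 0 := by omega
        cases q with
        | nil => simp [SimpleGraph.mem_neighborFinset, h]
        | cons h' q' => simp at this
    | succ n ih =>
      intro v u p hp
      have hmin : min (2 ^ n) p.length ≤ p.length := min_le_right _ _
      obtain ⟨w, q, r, hq, hr⟩ := walk_split (min (2 ^ n) p.length) p hmin
      rw [hAs]
      refine Finset.mem_biUnion.2 ⟨w, ih v w q (by rw [hq]; exact min_le_left _ _), ?_⟩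
      refine ih w u r ?_
      rw [hr]
      rcases le_total (2 ^ n) p.length with h | h
      · rw [min_eq_left h]
        have : p.length ≤ 2 ^ n + 2 ^ n := by rw [← two_mul, ← pow_succ']; exact hp
        omega
      · rw [min_eq_right h]; simp
  intro v
  ext u
  simp only [Finset.mem_filter, Finset.mem_univ, true_and]
  constructor
  · exact fwd k v u
  · intro hr
    obtain ⟨p, hp⟩ := hr.exists_walk_length_eq_dist
    exact bwd k v u p (hp ▸ hk v u hr)
end

section
/- The canonical configuration is a fixed point of the Hash-to-Min update: if D : V → Finset V is defined by D v = {u : V | G.Reachable v u} when v is the minimum vertex of its connected component, and D v = {m(v)} otherwise (where m(v) denotes the minimum vertex of the connected component of v), then applying one step of the Hash-to-Min update rule to the configuration D yields D again. -/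
open scoped Classical

/-- The canonical configuration is a fixed point of the Hash-to-Min update:
if `D v` is the whole connected component of `v` when `v` is the minimum vertex `m v` of
its component, and `{m v}` otherwise, then one Hash-to-Min update step maps `D` to `D`. -/
theorem hashToMin_canonical_fixed_point {V : Type*} [Fintype V] [LinearOrder V]
    (G : SimpleGraph V)
    (m : V → V)
    (hm : ∀ v : V, m v = (Finset.univ.filter fun u => G.Reachable v u).min'
      ⟨v, Finset.mem_filter.mpr ⟨Finset.mem_univ v, SimpleGraph.Reachable.refl v⟩⟩)
    (D : V → Finset V)
    (hD : ∀ v : V, D v =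
      if v = m v then Finset.univ.filter fun u => G.Reachable v u else {m v}) :
    ∀ v : V,
      ((Finset.univ.filter fun u : V => (D u).min = (v : WithTop V)).biUnion D) ∪
      (Finset.univ.filter fun w : V =>
        ∃ u : V, v ∈ D u ∧ (D u).min = (w : WithTop V)) = D v := by
  classical
  have hmemC : ∀ v, m v ∈ Finset.univ.filter fun u => G.Reachable v u := by
    intro v; rw [hm]; exact Finset.min'_mem _ _
  have hreach : ∀ v, G.Reachable v (m v) := fun v =>
    (Finset.mem_filter.mp (hmemC v)).2
  have hmle : ∀ v u, G.Reachable v u → m v ≤ u := by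
    intro v u h; rw [hm]
    exact Finset.min'_le _ _ (Finset.mem_filter.mpr ⟨Finset.mem_univ _, h⟩)
  have hmconst : ∀ v u, G.Reachable v u → m v = m u := by
    intro v u h
    exact le_antisymm (hmle v _ (h.trans (hreach u))) (hmle u _ (h.symm.trans (hreach v)))
  have hmm : ∀ v, m (m v) = m v := fun v => (hmconst v (m v) (hreach v)).symm
  have hDmin : ∀ u, (D u).min = (m u : WithTop V) := by
    intro u
    rw [hD u]
    by_cases h : u = m u
    · rw [if_pos h]
      have hne : (Finset.univ.filter fun w => G.Reachable u w).Nonempty :=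
        ⟨u, Finset.mem_filter.mpr ⟨Finset.mem_univ _, SimpleGraph.Reachable.refl u⟩⟩
      rw [← Finset.coe_min' hne, ← hm u, ← h]
    · rw [if_neg h, Finset.min_singleton]
  -- membership in D u implies reachability and conversely key facts
  have hDmem : ∀ u a, a ∈ D u → G.Reachable u a := by
    intro u a ha
    rw [hD u] at ha
    by_cases h : u = m u
    · rw [if_pos h] at ha; exact (Finset.mem_filter.mp ha).2
    · rw [if_neg h] at ha
      rw [Finset.mem_singleton] at ha
      exact ha ▸ hreach u
  intro v
  -- second set is always {m v}
  have hsecond : (Finset.univ.filter fun w : V =>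
      ∃ u : V, v ∈ D u ∧ (D u).min = (w : WithTop V)) = {m v} := by
    ext w
    simp only [Finset.mem_filter, Finset.mem_univ, true_and, Finset.mem_singleton]
    constructor
    · rintro ⟨u, hvu, hminu⟩
      rw [hDmin u] at hminu
      have hw : m u = w := by exact_mod_cast hminu
      have : m u = m v := hmconst u v (hDmem u v hvu)
      rw [← hw, this]
    · rintro rfl
      refine ⟨m v, ?_, ?_⟩
      · rw [hD (m v), if_pos (hmm v).symm]
        exact Finset.mem_filter.mpr ⟨Finset.mem_univ _, (hreach v).symm⟩
      · rw [hDmin (m v), hmm v]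
  rw [hsecond]
  by_cases hv : v = m v
  · -- D v is the whole component
    have hDv : D v = Finset.univ.filter fun u => G.Reachable v u := by
      rw [hD v, if_pos hv]
    ext a
    simp only [Finset.mem_union, Finset.mem_biUnion, Finset.mem_filter, Finset.mem_univ,
      true_and, Finset.mem_singleton, hDv]
    constructor
    · rintro (⟨u, hminu, hau⟩ | rfl)
      · rw [hDmin u] at hminu
        have hu : m u = v := by exact_mod_cast hminu
        exact ((hu ▸ hreach u).symm.trans (hDmem u a hau))
      · exact (hv ▸ hreach v : G.Reachable v (m v))
    · intro ha
      left
      exact ⟨v, by rw [hDmin v, ← hv], by rw [hDv]; exact Finset.mem_filter.mpr ⟨Finset.mem_univ a, ha⟩⟩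
  · -- D v = {m v}; first set is empty
    have hempty : (Finset.univ.filter fun u : V => (D u).min = (v : WithTop V)) = ∅ := by
      ext u
      simp only [Finset.mem_filter, Finset.mem_univ, true_and, Finset.notMem_empty,
        iff_false]
      intro h
      rw [hDmin u] at h
      have hu : m u = v := by exact_mod_cast h
      exact hv (by rw [← hu, hmm u])
    rw [hempty, hD v, if_neg hv]
    simp
end

section
/- The Hash-to-Min iteration converges to the canonical configuration: there exists K : ℕ such that for all k ≥ K and all vertices v, if v is the minimum vertex of its connected component then C k v = {u : V | G.Reachable v u}, and otherwise C k v = {m(v)}, where m(v) denotes the minimum vertex of the connected component of v. -/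
open scoped Classical

section HashToMinAux

variable {V : Type*} [Fintype V] [LinearOrder V]

private lemma aux_min_eq {s : Finset V} {a : V} (ha : a ∈ s) (h : ∀ b ∈ s, a ≤ b) :
    s.min = (a : WithTop V) := by
  have hne : s.Nonempty := ⟨a, ha⟩
  have h1 : s.min' hne = a :=
    le_antisymm (Finset.min'_le _ _ ha) (h _ (Finset.min'_mem _ _))
  rw [← Finset.coe_min' hne, h1]

private lemma aux_mono_stab (f : ℕ → Finset V) (hf : ∀ k, f k ⊆ f (k + 1)) :
    ∃ N, ∀ k, N ≤ k → f k = f N := by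
  have hmono : ∀ i j, i ≤ j → f i ⊆ f j := by
    intro i j hij
    induction j, hij using Nat.le_induction with
    | base => exact Finset.Subset.refl _
    | succ n hn ih => exact ih.trans (hf n)
  classical
  set g : V → ℕ := fun x => if h : ∃ k, x ∈ f k then Nat.find h else 0 with hg
  refine ⟨Finset.univ.sup g, fun k hk => Finset.Subset.antisymm ?_ (hmono _ _ hk)⟩
  intro x hx
  have hex : ∃ k, x ∈ f k := ⟨k, hx⟩
  have h1 : x ∈ f (Nat.find hex) := Nat.find_spec hex
  have h2 : g x ≤ Finset.univ.sup g := Finset.le_sup (Finset.mem_univ x)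
  have h3 : g x = Nat.find hex := by simp only [hg, dif_pos hex]
  exact hmono _ _ (by omega) h1

private lemma aux_anti_stab (c : ℕ → V) (hc : ∀ k, c (k + 1) ≤ c k) :
    ∃ M, ∀ k, M ≤ k → c k = c M := by
  have hanti : ∀ i j, i ≤ j → c j ≤ c i := by
    intro i j hij
    induction j, hij using Nat.le_induction with
    | base => exact le_refl _
    | succ n hn ih => exact (hc n).trans ih
  obtain ⟨N, hN⟩ := aux_mono_stab (fun k => Finset.univ.filter fun x => c k ≤ x)
    (by
      intro k x hx
      rw [Finset.mem_filter] at hx ⊢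
      exact ⟨hx.1, (hc k).trans hx.2⟩)
  refine ⟨N, fun k hk => ?_⟩
  have h1 : c k ∈ Finset.univ.filter fun x => c k ≤ x :=
    Finset.mem_filter.mpr ⟨Finset.mem_univ _, le_refl _⟩
  rw [hN k hk] at h1
  exact le_antisymm (hanti N k hk) (Finset.mem_filter.mp h1).2

/-- The step rule of Hash-to-Min. -/
private def HCS (C : ℕ → V → Finset V) : Prop :=
  ∀ (k : ℕ) (v : V), C (k + 1) v =
      ((Finset.univ.filter fun u : V => (C k u).min = (v : WithTop V)).biUnion (C k)) ∪
      (Finset.univ.filter fun w : V =>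
        ∃ u : V, v ∈ C k u ∧ (C k u).min = (w : WithTop V))

variable {G : SimpleGraph V} [DecidableRel G.Adj] {C : ℕ → V → Finset V}

private lemma aux_ship (hcs : HCS C) {k : ℕ} {u w : V}
    (h : (C k u).min = (w : WithTop V)) : C k u ⊆ C (k + 1) w := by
  intro x hx
  rw [hcs k w]
  exact Finset.mem_union_left _
    (Finset.mem_biUnion.mpr ⟨u, Finset.mem_filter.mpr ⟨Finset.mem_univ _, h⟩, hx⟩)

private lemma aux_send (hcs : HCS C) {k : ℕ} {u v w : V}
    (hv : v ∈ C k u) (h : (C k u).min = (w : WithTop V)) : w ∈ C (k + 1) v := by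
  rw [hcs k v]
  exact Finset.mem_union_right _
    (Finset.mem_filter.mpr ⟨Finset.mem_univ _, u, hv, h⟩)

private lemma aux_reach (hC0 : ∀ v : V, C 0 v = {v} ∪ G.neighborFinset v)
    (hcs : HCS C) : ∀ (k : ℕ) (v x : V), x ∈ C k v → G.Reachable v x := by
  intro k
  induction k with
  | zero =>
    intro v x hx
    rw [hC0 v] at hx
    rcases Finset.mem_union.mp hx with h | h
    · rw [Finset.mem_singleton] at h
      subst h
      exact SimpleGraph.Reachable.refl _
    · exact (G.mem_neighborFinset v x).mp h |>.reachable
  | succ k ih =>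
    intro v x hx
    rw [hcs k v] at hx
    rcases Finset.mem_union.mp hx with h | h
    · obtain ⟨u, hu, hxu⟩ := Finset.mem_biUnion.mp h
      have humin : (C k u).min = (v : WithTop V) := (Finset.mem_filter.mp hu).2
      have hvu : v ∈ C k u := Finset.mem_of_min humin
      exact (ih u v hvu).symm.trans (ih u x hxu)
    · obtain ⟨-, u, hvu, humin⟩ := Finset.mem_filter.mp h
      have hxu : x ∈ C k u := Finset.mem_of_min humin
      exact (ih u v hvu).symm.trans (ih u x hxu)

/-- If `a` is the minimum of its component, then `a ∈ C k a` for all `k`. -/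
private lemma aux_selfmem (hC0 : ∀ v : V, C 0 v = {v} ∪ G.neighborFinset v)
    (hcs : HCS C) {a : V} (ham : ∀ x, G.Reachable a x → a ≤ x) :
    ∀ k, a ∈ C k a := by
  intro k
  induction k with
  | zero =>
    rw [hC0 a]
    exact Finset.mem_union_left _ (Finset.mem_singleton_self a)
  | succ k ih =>
    have hmin : (C k a).min = (a : WithTop V) :=
      aux_min_eq ih (fun b hb => ham b (aux_reach hC0 hcs k a b hb))
    exact aux_ship hcs hmin ih

private lemma aux_selfmin (hC0 : ∀ v : V, C 0 v = {v} ∪ G.neighborFinset v)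
    (hcs : HCS C) {a : V} (ham : ∀ x, G.Reachable a x → a ≤ x) (k : ℕ) :
    (C k a).min = (a : WithTop V) :=
  aux_min_eq (aux_selfmem hC0 hcs ham k)
    (fun b hb => ham b (aux_reach hC0 hcs k a b hb))

/-- The key "edge" lemma: once `C · a` has stabilized to `S`, the set `S` is closed
under adjacency within the component. -/
private lemma aux_edge (hC0 : ∀ v : V, C 0 v = {v} ∪ G.neighborFinset v)
    (hcs : HCS C) {a : V} (ham : ∀ x, G.Reachable a x → a ≤ x)
    {S : Finset V} {N : ℕ} (hS : ∀ k, N ≤ k → C k a = S)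
    {x y : V} (hx : x ∈ S) (hadj : G.Adj x y) : y ∈ S := by
  have hToComp : ∀ b ∈ S, G.Reachable a b := by
    intro b hb
    rw [← hS N le_rfl] at hb
    exact aux_reach hC0 hcs N a b hb
  have hminS : ∀ k, N ≤ k → (C k a).min = (a : WithTop V) :=
    fun k _ => aux_selfmin hC0 hcs ham k
  have hreach_ax : G.Reachable a x := hToComp x hx
  -- the cluster of x eventually has min a
  have hCx_min : ∀ k, N + 1 ≤ k → (C k x).min = (a : WithTop V) := by
    intro k hk
    obtain ⟨j, rfl, hj⟩ : ∃ j, k = j + 1 ∧ N ≤ j := ⟨k - 1, by omega, by omega⟩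
    have hxj : x ∈ C j a := by rw [hS j hj]; exact hx
    have h1 : a ∈ C (j + 1) x := aux_send hcs hxj (hminS j hj)
    exact aux_min_eq h1 (fun b hb =>
      ham b (hreach_ax.trans (aux_reach hC0 hcs (j + 1) x b hb)))
  have hCx_sub : ∀ k, N + 1 ≤ k → C k x ⊆ S := by
    intro k hk
    have h1 : C k x ⊆ C (k + 1) a := aux_ship hcs (hCx_min k hk)
    rwa [hS (k + 1) (by omega)] at h1
  -- the tracking sequence for y
  let c : ℕ → V := fun k => Nat.rec y
    (fun k ck => if h : (C k ck).Nonempty then (C k ck).min' h else ck) k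
  have hc0 : c 0 = y := rfl
  have hcsucc : ∀ k, c (k + 1) =
      if h : (C k (c k)).Nonempty then (C k (c k)).min' h else c k := fun _ => rfl
  have hInv : ∀ k, x ∈ C k (c k) ∧ y ∈ C k (c k) ∧ c k ∈ C k (c k) := by
    intro k
    induction k with
    | zero =>
      rw [hc0, hC0 y]
      refine ⟨Finset.mem_union_right _ ((G.mem_neighborFinset y x).mpr hadj.symm),
        Finset.mem_union_left _ (Finset.mem_singleton_self y),
        Finset.mem_union_left _ (Finset.mem_singleton_self y)⟩
    | succ k ih =>
      have hne : (C k (c k)).Nonempty := ⟨x, ih.1⟩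
      have hc1 : c (k + 1) = (C k (c k)).min' hne := by
        rw [hcsucc k, dif_pos hne]
      have hmin : (C k (c k)).min = (c (k + 1) : WithTop V) := by
        rw [hc1, Finset.coe_min']
      have hsub : C k (c k) ⊆ C (k + 1) (c (k + 1)) := aux_ship hcs hmin
      exact ⟨hsub ih.1, hsub ih.2.1, hsub (hc1 ▸ Finset.min'_mem _ hne)⟩
  have hdec : ∀ k, c (k + 1) ≤ c k := by
    intro k
    have hne : (C k (c k)).Nonempty := ⟨x, (hInv k).1⟩
    rw [hcsucc k, dif_pos hne]
    exact Finset.min'_le _ _ (hInv k).2.2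
  obtain ⟨M, hM⟩ := aux_anti_stab c hdec
  obtain ⟨b, hb⟩ : ∃ b : V, c M = b := ⟨c M, rfl⟩
  have hbmin : ∀ k, M ≤ k → (C k b).min = (b : WithTop V) := by
    intro k hk
    have hck : c k = b := (hM k hk).trans hb
    have hne : (C k b).Nonempty := ⟨x, hck ▸ (hInv k).1⟩
    have hc1 : c (k + 1) = (C k b).min' hne := by
      rw [hcsucc k, hck, dif_pos hne]
    have : (C k b).min' hne = b := by
      rw [← hc1]; exact (hM (k + 1) (by omega)).trans hb
    rw [← Finset.coe_min' hne, this]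
  have hxCb : ∀ k, M ≤ k → x ∈ C k b := fun k hk =>
    ((hM k hk).trans hb) ▸ (hInv k).1
  -- b lands in S
  have hbS : b ∈ S := by
    have h1 : b ∈ C (max M (N + 1) + 1) x :=
      aux_send hcs (hxCb _ (le_max_left _ _)) (hbmin _ (le_max_left _ _))
    exact hCx_sub (max M (N + 1) + 1) (by omega) h1
  -- hence b = a
  have hab : a ≤ b := ham b (hToComp b hbS)
  have hba : b ≤ a := by
    have h1 : b ∈ C (max M N) a := by rw [hS _ (le_max_right _ _)]; exact hbS
    have h2 : a ∈ C (max M N + 1) b := aux_send hcs h1 (hminS _ (le_max_right _ _))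
    have h3 : (C (max M N + 1) b).min = (b : WithTop V) := hbmin _ (by omega)
    have h4 : (C (max M N + 1) b).min ≤ (a : WithTop V) := Finset.min_le h2
    rw [h3] at h4
    exact_mod_cast h4
  have hba' : b = a := le_antisymm hba hab
  -- conclude
  have hy : y ∈ C (max M N) b :=
    ((hM _ (le_max_left _ _)).trans hb) ▸ (hInv (max M N)).2.1
  rw [hba', hS _ (le_max_right _ _)] at hy
  exact hy

/-- The cluster of a component minimum eventually equals the whole component. -/
private lemma aux_full (hC0 : ∀ v : V, C 0 v = {v} ∪ G.neighborFinset v)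
    (hcs : HCS C) {a : V} (ham : ∀ x, G.Reachable a x → a ≤ x) :
    ∃ N, ∀ k, N ≤ k → C k a = Finset.univ.filter fun u => G.Reachable a u := by
  obtain ⟨N, hN⟩ := aux_mono_stab (fun k => C k a)
    (fun k => aux_ship hcs (aux_selfmin hC0 hcs ham k))
  have key : ∀ (u w : V) (p : G.Walk u w), u ∈ C N a → w ∈ C N a := by
    intro u w p
    induction p with
    | nil => exact id
    | cons h p ih =>
      intro hu
      exact ih (aux_edge hC0 hcs ham hN hu h)
  refine ⟨N, fun k hk => ?_⟩
  rw [hN k hk]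
  apply Finset.Subset.antisymm
  · intro z hz
    exact Finset.mem_filter.mpr ⟨Finset.mem_univ _, aux_reach hC0 hcs N a z hz⟩
  · intro z hz
    have hr : G.Reachable a z := (Finset.mem_filter.mp hz).2
    exact hr.elim fun p => key a z p (aux_selfmem hC0 hcs ham N)

end HashToMinAux

/-- The Hash-to-Min iteration converges to the canonical configuration:
eventually `C k v` is the whole connected component of `v` when `v` is the minimum
vertex `m v` of its component, and `{m v}` otherwise. -/
theorem hashToMin_converges {V : Type*} [Fintype V] [LinearOrder V]
    (G : SimpleGraph V) [DecidableRel G.Adj]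
    (m : V → V)
    (hm : ∀ v : V, m v = (Finset.univ.filter fun u => G.Reachable v u).min'
      ⟨v, Finset.mem_filter.mpr ⟨Finset.mem_univ v, SimpleGraph.Reachable.refl v⟩⟩)
    (C : ℕ → V → Finset V)
    (hC0 : ∀ v : V, C 0 v = {v} ∪ G.neighborFinset v)
    (hCs : ∀ (k : ℕ) (v : V), C (k + 1) v =
      ((Finset.univ.filter fun u : V => (C k u).min = (v : WithTop V)).biUnion (C k)) ∪
      (Finset.univ.filter fun w : V =>
        ∃ u : V, v ∈ C k u ∧ (C k u).min = (w : WithTop V))) :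
    ∃ K : ℕ, ∀ k, K ≤ k → ∀ v : V,
      C k v = if v = m v then Finset.univ.filter fun u => G.Reachable v u else {m v} := by
  classical
  have hcs : HCS C := hCs
  have hreach : ∀ v, G.Reachable v (m v) := by
    intro v
    rw [hm v]
    exact (Finset.mem_filter.mp (Finset.min'_mem _ _)).2
  have hmle : ∀ v u, G.Reachable v u → m v ≤ u := by
    intro v u h
    rw [hm v]
    exact Finset.min'_le _ _ (Finset.mem_filter.mpr ⟨Finset.mem_univ _, h⟩)
  have hmcongr : ∀ v u, G.Reachable v u → m v = m u := fun v u h =>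
    le_antisymm (hmle v (m u) (h.trans (hreach u))) (hmle u (m v) (h.symm.trans (hreach v)))
  have hmm : ∀ v, m (m v) = m v := fun v => (hmcongr v (m v) (hreach v)).symm
  have ham : ∀ v x, G.Reachable (m v) x → m v ≤ x := by
    intro v x h
    have := hmle (m v) x h
    rwa [hmm v] at this
  have hfull : ∀ v : V, ∃ N, ∀ k, N ≤ k →
      C k (m v) = Finset.univ.filter fun u => G.Reachable (m v) u :=
    fun v => aux_full hC0 hcs (ham v)
  choose Nf hNf using hfull
  set N0 := Finset.univ.sup Nf with hN0def
  have hN0 : ∀ (v : V) (k : ℕ), N0 ≤ k →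
      C k (m v) = Finset.univ.filter fun u => G.Reachable (m v) u :=
    fun v k hk => hNf v k ((Finset.le_sup (Finset.mem_univ v)).trans hk)
  have hvmem : ∀ (v : V) (k : ℕ), N0 ≤ k → v ∈ C k (m v) := by
    intro v k hk
    rw [hN0 v k hk]
    exact Finset.mem_filter.mpr ⟨Finset.mem_univ _, (hreach v).symm⟩
  have hminm : ∀ (v : V) (k : ℕ), N0 ≤ k → (C k (m v)).min = (m v : WithTop V) := by
    intro v k hk
    exact aux_min_eq
      (by
        rw [hN0 v k hk]
        exact Finset.mem_filter.mpr ⟨Finset.mem_univ _, SimpleGraph.Reachable.refl _⟩)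
      (fun b hb => ham v b (aux_reach hC0 hcs k (m v) b hb))
  have hminv : ∀ (v : V) (k : ℕ), N0 + 1 ≤ k → (C k v).min = (m v : WithTop V) := by
    intro v k hk
    obtain ⟨j, rfl, hj⟩ : ∃ j, k = j + 1 ∧ N0 ≤ j := ⟨k - 1, by omega, by omega⟩
    have h1 : m v ∈ C (j + 1) v := aux_send hcs (hvmem v j hj) (hminm v j hj)
    exact aux_min_eq h1 (fun b hb => hmle v b (aux_reach hC0 hcs (j + 1) v b hb))
  refine ⟨N0 + 2, fun k hk v => ?_⟩
  obtain ⟨j, rfl, hj⟩ : ∃ j, k = j + 1 ∧ N0 + 1 ≤ j := ⟨k - 1, by omega, by omega⟩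
  by_cases h : v = m v
  · rw [if_pos h]
    apply Finset.Subset.antisymm
    · intro x hx
      rw [hCs j v] at hx
      rcases Finset.mem_union.mp hx with hx | hx
      · obtain ⟨u, hu, hxu⟩ := Finset.mem_biUnion.mp hx
        have humin : (C j u).min = (v : WithTop V) := (Finset.mem_filter.mp hu).2
        have hvu : v ∈ C j u := Finset.mem_of_min humin
        exact Finset.mem_filter.mpr ⟨Finset.mem_univ _,
          (aux_reach hC0 hcs j u v hvu).symm.trans (aux_reach hC0 hcs j u x hxu)⟩
      · obtain ⟨-, u, hvu, humin⟩ := Finset.mem_filter.mp hx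
        have hxu : x ∈ C j u := Finset.mem_of_min humin
        exact Finset.mem_filter.mpr ⟨Finset.mem_univ _,
          (aux_reach hC0 hcs j u v hvu).symm.trans (aux_reach hC0 hcs j u x hxu)⟩
    · intro x hx
      have hx' : x ∈ C j v := by
        have h2 := hN0 v j (by omega)
        rw [← h] at h2
        rw [h2]
        exact hx
      have hminj : (C j v).min = (v : WithTop V) := by
        have h2 := hminv v j hj
        rw [← h] at h2
        exact h2
      exact aux_ship hcs hminj hx'
  · rw [if_neg h]
    apply Finset.Subset.antisymm
    · intro x hx
      rw [hCs j v] at hx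
      rcases Finset.mem_union.mp hx with hx | hx
      · obtain ⟨u, hu, hxu⟩ := Finset.mem_biUnion.mp hx
        have humin : (C j u).min = (v : WithTop V) := (Finset.mem_filter.mp hu).2
        have hvu : v ∈ C j u := Finset.mem_of_min humin
        have h2 : (C j u).min = (m u : WithTop V) := hminv u j hj
        have hmu : m u = v := by
          rw [humin] at h2
          exact_mod_cast h2.symm
        have h3 : m u = m v := hmcongr u v (aux_reach hC0 hcs j u v hvu)
        exact absurd (by rw [← h3, hmu]) h
      · obtain ⟨-, u, hvu, humin⟩ := Finset.mem_filter.mp hx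
        have h2 : (C j u).min = (m u : WithTop V) := hminv u j hj
        have hxu : x = m u := by
          rw [humin] at h2
          exact_mod_cast h2
        have h3 : m u = m v := hmcongr u v (aux_reach hC0 hcs j u v hvu)
        rw [Finset.mem_singleton, hxu, h3]
    · intro x hx
      rw [Finset.mem_singleton] at hx
      subst hx
      exact aux_send hcs (hvmem v j (by omega)) (hminm v j (by omega))
end

section
/- Let n ≥ 2 and let G be the path graph on Fin n with the natural linear order on Fin n (so vertex ids increase from left to right along the path, and vertex 0 is the minimum). Then for every k : ℕ the Hash-to-Min clusters satisfy: (i) for every vertex j with (j : ℕ) ≤ 2^k, vertex 0 ∈ C k j and j ∈ C k 0; (ii) for all vertices i < j with (j : ℕ) − (i : ℕ) = 2^k, i ∈ C k j and j ∈ C k i; (iii) for all vertices i, j, if i ∈ C k j then the distance |(i : ℕ) − (j : ℕ)| ≤ 2^k. -/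
/-!
After `k` rounds on the path, the cluster of `j` is contained in the ball of radius `2^k` around
`j` and contains `j - 2^k` (truncated at `0`), so its minimum is exactly `j - 2^k`. One more
round then sends `j` to the cluster of `j - 2^(k+1)` and that vertex to the cluster of `j`,
through the intermediate vertex `j - 2^k`, while the triangle inequality keeps every cluster
inside the ball of radius `2^(k+1)`.
-/

namespace HashToMin

section Step

variable {V : Type*} [Fintype V] [DecidableEq V] [LinearOrder V]

def step (c : V → Finset V) (v : V) : Finset V :=
  ((Finset.univ.filter fun u : V => (c u).min = (v : WithTop V)).biUnion c) ∪
    (Finset.univ.filter fun w : V => ∃ u : V, v ∈ c u ∧ (c u).min = (w : WithTop V))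

theorem mem_step_iff {c : V → Finset V} {v x : V} :
    x ∈ step c v ↔
      (∃ u, (c u).min = (v : WithTop V) ∧ x ∈ c u) ∨
        (∃ u, v ∈ c u ∧ (c u).min = (x : WithTop V)) := by
  simp only [step, Finset.mem_union, Finset.mem_biUnion, Finset.mem_filter, Finset.mem_univ,
    true_and]

end Step

section Path

variable {n : ℕ}

/-- `j - r` in `Fin n`, truncated at `0` rather than taken modulo `n`. -/
def truncSub (j : Fin n) (r : ℕ) : Fin n :=
  ⟨j - r, lt_of_le_of_lt (Nat.sub_le _ _) j.isLt⟩

@[simp]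
theorem val_truncSub (j : Fin n) (r : ℕ) : (truncSub j r : ℕ) = j - r := rfl

theorem truncSub_truncSub (j : Fin n) (r s : ℕ) : truncSub (truncSub j r) s = truncSub j (r + s) :=
  Fin.ext (Nat.sub_sub _ _ _)

theorem dist_truncSub_le (j : Fin n) (r : ℕ) : Nat.dist (truncSub j r : ℕ) j ≤ r := by
  rw [val_truncSub, Nat.dist_eq_sub_of_le (Nat.sub_le _ _)]
  omega

/-- The invariant of round `k` on the path, with `r = 2^k`. -/
structure IsRadius (r : ℕ) (c : Fin n → Finset (Fin n)) : Prop where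
  truncSub_mem (j : Fin n) : truncSub j r ∈ c j
  mem_truncSub (j : Fin n) : j ∈ c (truncSub j r)
  dist_le {i j : Fin n} : i ∈ c j → Nat.dist i j ≤ r

variable {r : ℕ} {c : Fin n → Finset (Fin n)}

theorem IsRadius.min_eq (hc : IsRadius r c) (j : Fin n) :
    (c j).min = (truncSub j r : WithTop (Fin n)) := by
  refine le_antisymm (Finset.min_le (hc.truncSub_mem j)) (Finset.le_min fun i hi => ?_)
  have hij := hc.dist_le hi
  rw [Nat.dist_comm] at hij
  exact WithTop.coe_le_coe.mpr (Fin.mk_le_mk.mpr (by unfold Nat.dist at hij; omega))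

theorem IsRadius.dist_le_of_min_eq (hc : IsRadius r c) {i j u : Fin n} (hi : i ∈ c u)
    (hj : (c u).min = (j : WithTop (Fin n))) : Nat.dist i j ≤ r + r := by
  rw [hc.min_eq, WithTop.coe_eq_coe] at hj
  calc Nat.dist i j ≤ Nat.dist i u + Nat.dist u j := Nat.dist.triangle_inequality _ _ _
    _ ≤ r + r := by
      gcongr
      · exact hc.dist_le hi
      · rw [Nat.dist_comm, ← hj]; exact dist_truncSub_le u r

theorem IsRadius.step (hc : IsRadius r c) : IsRadius (r + r) (step c) where
  truncSub_mem j := mem_step_iff.mpr <| .inr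
    ⟨truncSub j r, hc.mem_truncSub j, by rw [hc.min_eq, truncSub_truncSub]⟩
  mem_truncSub j := mem_step_iff.mpr <| .inl
    ⟨truncSub j r, by rw [hc.min_eq, truncSub_truncSub], hc.mem_truncSub j⟩
  dist_le {i j} h := by
    rcases mem_step_iff.mp h with ⟨u, hu, hi⟩ | ⟨u, hj, hu⟩
    · exact hc.dist_le_of_min_eq hi hu
    · rw [Nat.dist_comm]; exact hc.dist_le_of_min_eq hj hu

theorem isRadius_one_of_mem_iff (hc : ∀ i j : Fin n, i ∈ c j ↔ Nat.dist i j ≤ 1) :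
    IsRadius 1 c where
  truncSub_mem j := (hc _ _).mpr (dist_truncSub_le j 1)
  mem_truncSub j := (hc _ _).mpr (Nat.dist_comm (j : ℕ) _ ▸ dist_truncSub_le j 1)
  dist_le {i j} := (hc i j).mp

theorem mem_closedNeighborhood_iff_dist_le_one (G : SimpleGraph (Fin n)) [DecidableRel G.Adj]
    (hG : ∀ i j : Fin n, G.Adj i j ↔ Nat.dist i j = 1) (i j : Fin n) :
    i ∈ {j} ∪ G.neighborFinset j ↔ Nat.dist i j ≤ 1 := by
  rw [Finset.mem_union, Finset.mem_singleton, SimpleGraph.mem_neighborFinset, hG, Nat.dist_comm,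
    ← Fin.val_inj]
  unfold Nat.dist
  omega

end Path

end HashToMin

open scoped Classical

open HashToMin in
/-- On the path graph on `Fin n` (`n ≥ 2`) with the natural order, after
`k` rounds of Hash-to-Min: (i) vertex `0` and every vertex `j` with `j ≤ 2^k` know each
other; (ii) any two vertices exactly `2^k` apart know each other; (iii) a vertex only
knows vertices at distance at most `2^k`. -/
theorem hashToMin_monotone_path {n : ℕ} (hn : 2 ≤ n)
    (G : SimpleGraph (Fin n)) [DecidableRel G.Adj]
    (hG : ∀ i j : Fin n, G.Adj i j ↔ Nat.dist i.val j.val = 1)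
    (C : ℕ → Fin n → Finset (Fin n))
    (hC0 : ∀ v : Fin n, C 0 v = {v} ∪ G.neighborFinset v)
    (hCs : ∀ (k : ℕ) (v : Fin n), C (k + 1) v =
      ((Finset.univ.filter fun u : Fin n => (C k u).min = (v : WithTop (Fin n))).biUnion
        (C k)) ∪
      (Finset.univ.filter fun w : Fin n =>
        ∃ u : Fin n, v ∈ C k u ∧ (C k u).min = (w : WithTop (Fin n)))) :
    ∀ k : ℕ,
      (∀ j : Fin n, (j : ℕ) ≤ 2 ^ k →
        (⟨0, by omega⟩ : Fin n) ∈ C k j ∧ j ∈ C k ⟨0, by omega⟩) ∧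
      (∀ i j : Fin n, i < j → (j : ℕ) - (i : ℕ) = 2 ^ k →
        i ∈ C k j ∧ j ∈ C k i) ∧
      (∀ i j : Fin n, i ∈ C k j → Nat.dist (i : ℕ) (j : ℕ) ≤ 2 ^ k) := by
  -- `congr` closes the gap between the `Decidable` instances of the two filters.
  have hC_succ : ∀ k, C (k + 1) = step (C k) := fun k =>
    funext fun v => by rw [hCs, step]; congr
  have hC : ∀ k, IsRadius (2 ^ k) (C k) := by
    intro k
    induction k with
    | zero =>
      refine isRadius_one_of_mem_iff fun i j => ?_
      rw [hC0]
      exact mem_closedNeighborhood_iff_dist_le_one G hG i j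
    | succ k ih =>
      rw [pow_succ, mul_two, hC_succ]
      exact ih.step
  intro k
  refine ⟨fun j hj => ?_, fun i j hij hd => ?_, fun i j => (hC k).dist_le⟩
  · have h0 : (⟨0, by omega⟩ : Fin n) = truncSub j (2 ^ k) := Fin.ext (by simp; omega)
    exact h0 ▸ ⟨(hC k).truncSub_mem j, (hC k).mem_truncSub j⟩
  · have hi : i = truncSub j (2 ^ k) := Fin.ext (by simp; omega)
    exact hi ▸ ⟨(hC k).truncSub_mem j, (hC k).mem_truncSub j⟩
end

section
/- Let n ≥ 2 and let G be the path graph on Fin n with the natural linear order on Fin n. Then for every k with 2^k ≥ n − 1, the Hash-to-Min cluster of the minimum vertex contains the entire path: C k 0 = the set of all vertices of Fin n. -/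
/-!
As long as `2 ^ k ≤ n - 1`, the cluster `C k v` lies in the window `[v - 2 ^ k, v + 2 ^ k]`
and contains all of it except possibly some points near the right end of the path; in
particular `min (C k u) = u - 2 ^ k` (truncated). Hence in each round `v` receives the cluster
of `v + 2 ^ k`, doubling the radius. In the round where `2 ^ k` reaches `n - 1`, vertex `0`
receives the clusters `C k u` of all `u ≤ 2 ^ k`, which cover the path; from then on the
cluster of the least vertex contains everything.
-/

open scoped Classical

open Finset

section HashToMin

variable {V : Type*} [Fintype V] [LinearOrder V]

def hashToMinStep (C : V → Finset V) (v : V) : Finset V :=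
  ((univ.filter fun u => (C u).min = (v : WithTop V)).biUnion C) ∪
    univ.filter fun w => ∃ u, v ∈ C u ∧ (C u).min = (w : WithTop V)

theorem mem_hashToMinStep {C : V → Finset V} {v x : V} :
    x ∈ hashToMinStep C v ↔
      (∃ u, (C u).min = (v : WithTop V) ∧ x ∈ C u) ∨
        ∃ u, v ∈ C u ∧ (C u).min = (x : WithTop V) := by
  simp [hashToMinStep]

theorem hashToMinStep_eq_univ_of_eq_univ {C : V → Finset V} {v : V} (hv : ∀ w, v ≤ w)
    (h : C v = univ) : hashToMinStep C v = univ := by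
  have hmin : (C v).min = (v : WithTop V) := by
    rw [h]
    exact le_antisymm (Finset.min_le (mem_univ v))
      (Finset.le_min fun w _ => WithTop.coe_le_coe.mpr (hv w))
  exact eq_univ_of_forall fun x => mem_hashToMinStep.mpr (.inl ⟨v, hmin, h ▸ mem_univ x⟩)

end HashToMin

/-- Near the right end of the path a Hash-to-Min cluster can miss points of its window, even
its centre (for `n ≥ 3`, `C 1 (n - 1) = {n - 3, n - 2}`); the condition `x + v + r ≤ 2 * n - 1`
in `mem_of_le` is a lower bound that survives the doubling step. -/
structure PathClusterBounds (n r : ℕ) (s : Fin n → Finset (Fin n)) : Prop where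
  le_add_of_mem : ∀ {v x : Fin n}, x ∈ s v → v.val ≤ x.val + r ∧ x.val ≤ v.val + r
  mem_of_le : ∀ {v x : Fin n}, v.val ≤ x.val + r → x.val ≤ v.val + r →
    x.val + v.val + r ≤ 2 * n - 1 → x ∈ s v

namespace PathClusterBounds

variable {n r : ℕ} {s : Fin n → Finset (Fin n)}

theorem min_eq_iff (h : PathClusterBounds n r s) (hr : r ≤ n - 1) (u w : Fin n) :
    (s u).min = (w : WithTop (Fin n)) ↔ w.val = u.val - r := by
  obtain ⟨m, hm⟩ : ∃ m : Fin n, m.val = u.val - r := ⟨⟨u.val - r, by omega⟩, rfl⟩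
  have hmin : (s u).min = (m : WithTop (Fin n)) :=
    le_antisymm (Finset.min_le (h.mem_of_le (by omega) (by omega) (by omega)))
      (Finset.le_min fun x hx => WithTop.coe_le_coe.mpr (Fin.le_def.mpr (by
        have := h.le_add_of_mem hx
        omega)))
  rw [hmin, WithTop.coe_eq_coe, eq_comm, Fin.ext_iff, hm]

theorem hashToMinStep (h : PathClusterBounds n r s) (hr : r ≤ n - 1) :
    PathClusterBounds n (2 * r) (hashToMinStep s) where
  le_add_of_mem {v x} hx := by
    rcases mem_hashToMinStep.mp hx with ⟨u, hu, hxu⟩ | ⟨u, hvu, hu⟩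
    · have := h.le_add_of_mem hxu
      have := (h.min_eq_iff hr u v).mp hu
      omega
    · have := h.le_add_of_mem hvu
      have := (h.min_eq_iff hr u x).mp hu
      omega
  mem_of_le {v x} h₁ h₂ h₃ := by
    rcases le_or_gt v.val x.val with hvx | hxv
    · -- `x` lies in the cluster of `v + r`, whose minimum is `v`
      obtain ⟨u, hu⟩ : ∃ u : Fin n, u.val = v.val + r := ⟨⟨v.val + r, by omega⟩, rfl⟩
      refine mem_hashToMinStep.mpr (.inl ⟨u, (h.min_eq_iff hr u v).mpr (by omega), ?_⟩)
      exact h.mem_of_le (by omega) (by omega) (by omega)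
    · -- `v` lies in the cluster of `x + r`, whose minimum is `x`
      obtain ⟨u, hu⟩ : ∃ u : Fin n, u.val = x.val + r := ⟨⟨x.val + r, by omega⟩, rfl⟩
      refine mem_hashToMinStep.mpr (.inr ⟨u, ?_, (h.min_eq_iff hr u x).mpr (by omega)⟩)
      exact h.mem_of_le (by omega) (by omega) (by omega)

theorem mem_hashToMinStep_of_le (h : PathClusterBounds n r s) (hr : r ≤ n - 1)
    {z x : Fin n} (hz : z.val = 0) (hx : x.val ≤ 2 * r) : x ∈ _root_.hashToMinStep s z := by
  have := x.isLt
  obtain ⟨u, hu⟩ : ∃ u : Fin n, u.val = x.val - r := ⟨⟨x.val - r, by omega⟩, rfl⟩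
  refine mem_hashToMinStep.mpr (.inl ⟨u, (h.min_eq_iff hr u z).mpr (by omega), ?_⟩)
  exact h.mem_of_le (by omega) (by omega) (by omega)

end PathClusterBounds

theorem pathClusterBounds_one {n : ℕ} (G : SimpleGraph (Fin n)) [DecidableRel G.Adj]
    (hG : ∀ i j : Fin n, G.Adj i j ↔ Nat.dist i.val j.val = 1) :
    PathClusterBounds n 1 fun v => {v} ∪ G.neighborFinset v where
  le_add_of_mem {v x} hx := by
    rcases mem_union.mp hx with hx | hx
    · rw [mem_singleton.mp hx]
      omega
    · have : v.val - x.val + (x.val - v.val) = 1 := (hG v x).mp ((G.mem_neighborFinset v x).mp hx)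
      omega
  mem_of_le {v x} h₁ h₂ _ := by
    by_cases hxv : x = v
    · exact mem_union_left _ (mem_singleton.mpr hxv)
    · have : x.val ≠ v.val := Fin.val_ne_of_ne hxv
      refine mem_union_right _ ((G.mem_neighborFinset v x).mpr ((hG v x).mpr ?_))
      change v.val - x.val + (x.val - v.val) = 1
      omega

theorem pathClusterBounds_pow {n : ℕ} (G : SimpleGraph (Fin n)) [DecidableRel G.Adj]
    (hG : ∀ i j : Fin n, G.Adj i j ↔ Nat.dist i.val j.val = 1)
    (C : ℕ → Fin n → Finset (Fin n)) (hC0 : ∀ v, C 0 v = {v} ∪ G.neighborFinset v)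
    (hCs : ∀ k, C (k + 1) = hashToMinStep (C k)) (k : ℕ) (hk : 2 ^ k ≤ n - 1) :
    PathClusterBounds n (2 ^ k) (C k) := by
  induction k with
  | zero =>
    rw [funext hC0, pow_zero]
    exact pathClusterBounds_one G hG
  | succ k ih =>
    rw [pow_succ] at hk
    rw [hCs, pow_succ, mul_comm]
    exact (ih (by omega)).hashToMinStep (by omega)

/-- On the path graph on `Fin n` (`n ≥ 2`) with the natural order, for
every `k` with `2^k ≥ n - 1`, the Hash-to-Min cluster of the minimum vertex `0`
contains the entire path. -/
theorem hashToMin_monotone_path_converges {n : ℕ} (hn : 2 ≤ n)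
    (G : SimpleGraph (Fin n)) [DecidableRel G.Adj]
    (hG : ∀ i j : Fin n, G.Adj i j ↔ Nat.dist i.val j.val = 1)
    (C : ℕ → Fin n → Finset (Fin n))
    (hC0 : ∀ v : Fin n, C 0 v = {v} ∪ G.neighborFinset v)
    (hCs : ∀ (k : ℕ) (v : Fin n), C (k + 1) v =
      ((Finset.univ.filter fun u : Fin n => (C k u).min = (v : WithTop (Fin n))).biUnion
        (C k)) ∪
      (Finset.univ.filter fun w : Fin n =>
        ∃ u : Fin n, v ∈ C k u ∧ (C k u).min = (w : WithTop (Fin n))))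
    (k : ℕ) (hk : n - 1 ≤ 2 ^ k) :
    C k ⟨0, by omega⟩ = Finset.univ := by
  have hstep : ∀ k, C (k + 1) = hashToMinStep (C k) := fun k => funext fun v => by
    rw [hCs, hashToMinStep]
    congr
  have bounds := pathClusterBounds_pow G hG C hC0 hstep
  induction k with
  | zero =>
    exact eq_univ_of_forall fun x =>
      (bounds 0 (by omega)).mem_of_le (v := ⟨0, by omega⟩) (by simp) (by simp; omega)
        (by simp; omega)
  | succ k ih =>
    rw [hstep]
    by_cases hk' : n - 1 ≤ 2 ^ k
    · exact hashToMinStep_eq_univ_of_eq_univ (fun w => Nat.zero_le w.val) (ih hk')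
    · exact eq_univ_of_forall fun x =>
        (bounds k (by omega)).mem_hashToMinStep_of_le (by omega) rfl (by rw [pow_succ] at hk; omega)
end

section
/- Let l be a list over a linear order with no duplicate entries. Then no two adjacent indices of l are both local-minimum indices, and consequently the number of local-minimum indices of l is at most ⌈(length of l)/2⌉. -/
open scoped Classical

/-- An index `i` of the list `l` is a local-minimum index if `l[i] < l[i-1]` whenever
`i > 0` and `l[i] < l[i+1]` whenever `i + 1 < l.length`. -/
def IsLocalMinIdx {α : Type*} [LinearOrder α] (l : List α) (i : ℕ) : Prop :=
  ∃ h : i < l.length,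
    (∀ _hi : 0 < i, l[i] < l[i - 1]) ∧ (∀ _hj : i + 1 < l.length, l[i] < l[i + 1])

theorem IsLocalMinIdx.not_succ {α : Type*} [LinearOrder α] {l : List α} {i : ℕ}
    (hi : IsLocalMinIdx l i) : ¬ IsLocalMinIdx l (i + 1) := by
  obtain ⟨_, -, hlt_next⟩ := hi
  rintro ⟨hlen, hlt_prev, _⟩
  exact lt_asymm (hlt_next hlen) (hlt_prev i.succ_pos)

/-- Halving `i ↦ i / 2` is injective on a set without two consecutive elements. -/
theorem Finset.card_le_half_of_succ_notMem {s : Finset ℕ} {n : ℕ} (hs : s ⊆ Finset.range n)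
    (hsucc : ∀ i ∈ s, i + 1 ∉ s) : s.card ≤ (n + 1) / 2 := by
  calc s.card ≤ (Finset.range ((n + 1) / 2)).card := by
        refine Finset.card_le_card_of_injOn (· / 2) (fun i hi => ?_) (fun i hi j hj hij => ?_)
        · have := Finset.mem_range.1 (hs hi)
          simp only [Finset.coe_range, Set.mem_Iio]
          omega
        · by_contra hne
          have hij : i / 2 = j / 2 := hij
          obtain rfl | rfl : j = i + 1 ∨ i = j + 1 := by omega
          exacts [hsucc i hi hj, hsucc j hj hi]
    _ = (n + 1) / 2 := Finset.card_range _

theorem localMin_adjacent_and_count_general {α : Type*} [LinearOrder α]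
    (l : List α) :
    (∀ i : ℕ, IsLocalMinIdx l i → ¬ IsLocalMinIdx l (i + 1)) ∧
    ((Finset.range l.length).filter fun i => IsLocalMinIdx l i).card ≤
      (l.length + 1) / 2 :=
  ⟨fun _ => IsLocalMinIdx.not_succ,
    Finset.card_le_half_of_succ_notMem (Finset.filter_subset _ _)
      fun _ hi hsucc => (Finset.mem_filter.1 hi).2.not_succ (Finset.mem_filter.1 hsucc).2⟩

/-- In a duplicate-free list, no two adjacent indices are both
local-minimum indices; consequently the number of local-minimum indices is at most
`⌈(length l)/2⌉`. -/
theorem localMin_adjacent_and_count {α : Type*} [LinearOrder α]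
    (l : List α) (hl : l.Nodup) :
    (∀ i : ℕ, IsLocalMinIdx l i → ¬ IsLocalMinIdx l (i + 1)) ∧
    ((Finset.range l.length).filter fun i => IsLocalMinIdx l i).card ≤
      (l.length + 1) / 2 :=
  localMin_adjacent_and_count_general l
end

section
/- Let T : ℕ → ℕ → ℝ be any function satisfying: (a) T k 0 ≥ 2^k for all k : ℕ; (b) T 0 ℓ ≥ 1 and T 1 ℓ ≥ 1 for all ℓ : ℕ; and (c) for all k ≥ 2 and all ℓ ≥ 1, T k ℓ ≥ min(T (k−1) ℓ + T (k−2) ℓ, T (k−2) (ℓ−1)). Then for all k : ℕ and ℓ : ℕ, T k ℓ ≥ 2^(k/2 − ℓ), where the exponent k/2 − ℓ is computed in the reals. -/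
/-- Any function `T : ℕ → ℕ → ℝ` with `T k 0 ≥ 2^k`, `T 0 ℓ ≥ 1`,
`T 1 ℓ ≥ 1`, and satisfying the recurrence inequality
`T k ℓ ≥ min (T (k-1) ℓ + T (k-2) ℓ) (T (k-2) (ℓ-1))` for `k ≥ 2`, `ℓ ≥ 1`,
satisfies `T k ℓ ≥ 2 ^ (k/2 - ℓ)` (real exponent). -/
theorem recurrence_lower_bound (T : ℕ → ℕ → ℝ)
    (ha : ∀ k : ℕ, T k 0 ≥ 2 ^ k)
    (hb0 : ∀ ℓ : ℕ, T 0 ℓ ≥ 1) (hb1 : ∀ ℓ : ℕ, T 1 ℓ ≥ 1)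
    (hc : ∀ k : ℕ, 2 ≤ k → ∀ ℓ : ℕ, 1 ≤ ℓ →
      T k ℓ ≥ min (T (k - 1) ℓ + T (k - 2) ℓ) (T (k - 2) (ℓ - 1))) :
    ∀ (k ℓ : ℕ), T k ℓ ≥ (2 : ℝ) ^ ((k : ℝ) / 2 - (ℓ : ℝ)) := by
  intro k
  induction k using Nat.strong_induction_on with
  | _ k IH =>
    intro ℓ
    rcases Nat.eq_zero_or_pos ℓ with hℓ | hℓ
    · subst hℓ
      calc (2 : ℝ) ^ ((k : ℝ) / 2 - ((0 : ℕ) : ℝ)) ≤ 2 ^ (k : ℝ) := by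
            apply Real.rpow_le_rpow_of_exponent_le one_le_two
            have : (0 : ℝ) ≤ (k : ℝ) := Nat.cast_nonneg k
            push_cast
            linarith
        _ = 2 ^ k := Real.rpow_natCast 2 k
        _ ≤ T k 0 := ha k
    · have hℓ1 : (1 : ℝ) ≤ (ℓ : ℝ) := by exact_mod_cast hℓ
      match k with
      | 0 =>
        calc (2 : ℝ) ^ (((0 : ℕ) : ℝ) / 2 - (ℓ : ℝ)) ≤ 2 ^ (0 : ℝ) := by
              apply Real.rpow_le_rpow_of_exponent_le one_le_two
              push_cast; linarith
          _ = 1 := Real.rpow_zero 2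
          _ ≤ T 0 ℓ := hb0 ℓ
      | 1 =>
        calc (2 : ℝ) ^ (((1 : ℕ) : ℝ) / 2 - (ℓ : ℝ)) ≤ 2 ^ (0 : ℝ) := by
              apply Real.rpow_le_rpow_of_exponent_le one_le_two
              push_cast; linarith
          _ = 1 := Real.rpow_zero 2
          _ ≤ T 1 ℓ := hb1 ℓ
      | (k + 2) =>
        have hrec := hc (k + 2) (by omega) ℓ hℓ
        simp only [Nat.add_sub_cancel, show k + 2 - 1 = k + 1 from rfl] at hrec
        refine le_trans (le_min ?_ ?_) hrec
        · have h1 := IH (k + 1) (by omega) ℓ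
          have h2 := IH k (by omega) ℓ
          set x : ℝ := (k : ℝ) / 2 - (ℓ : ℝ) with hx
          have e1 : ((k + 1 : ℕ) : ℝ) / 2 - (ℓ : ℝ) = x + 1 / 2 := by
            push_cast; ring
          have e2 : ((k + 2 : ℕ) : ℝ) / 2 - (ℓ : ℝ) = x + 1 := by
            push_cast; ring
          rw [e1] at h1
          rw [e2]
          have hmono : (2 : ℝ) ^ x ≤ 2 ^ (x + 1 / 2) :=
            Real.rpow_le_rpow_of_exponent_le one_le_two (by linarith)
          have hsum : (2 : ℝ) ^ (x + 1) = 2 ^ x * 2 := by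
            rw [Real.rpow_add_one (by norm_num)]
          linarith
        · have h3 := IH k (by omega) (ℓ - 1)
          have e3 : ((k + 2 : ℕ) : ℝ) / 2 - (ℓ : ℝ) = (k : ℝ) / 2 - ((ℓ - 1 : ℕ) : ℝ) := by
            rw [Nat.cast_sub hℓ]
            push_cast; ring
          rw [e3]
          exact h3
end
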